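/- arXiv:2312.07455 — 3 statements merged into one kernel-verified Lean document; each statement's English description precedes it below -/
import Mathlib

section
/- Let C : (Fin d → Fin n) → ℝ be an order-d tensor and let a, b, f ⊆ Fin d be pairwise disjoint with a ∪ b ∪ f = Fin d. Let r_a, r_b, r_f denote the ranks of the unfolding matrices of C along a, along b, and along f, respectively. Then there exist C_a : ((a → Fin n) × Fin r_a) → ℝ, C_b : ((b → Fin n) × Fin r_b) → ℝ, C_f : (Fin r_f × (f → Fin n)) → ℝ, and a core tensor G : Fin r_a × Fin r_b × Fin r_f → ℝ such that C(i) = Σ_{α,β,θ} C_a(i_a, α) · C_b(i_b, β) · G(α, β, θ) · C_f(θ, i_f) for every index tuple i; moreover C_a and C_b (viewed as matrices with columns indexed by Fin r_a, Fin r_b) have full column rank, and C_f (viewed as a matrix with rows indexed by Fin r_f) has full row rank. -/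
/-!
View `C` as a three-way tensor `T x y z` in the multi-indices on `a`, `b` and `f`; its three
matricizations are reindexings of the unfoldings of `C` along `a`, `b` and `f`. A rank
factorization `M = P * (L * M)` with `L * P = 1` of the first matricization writes `T` as the
mode-1 product of `P` with a smaller tensor `S`. In the other two matricizations this product is
right multiplication by a Kronecker product `1 ⊗ₖ Pᵀ`, which has the right inverse `1 ⊗ₖ Lᵀ`,
so `S` keeps the other two ranks. Peeling off one factor per mode while rotating the modes
cyclically yields `C_a`, `C_b`, `C_f`, and what remains is the core `G`.
-/

/-- The unfolding matrix of an order-`d` tensor `C` along a subset `S ⊆ Fin d`: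
rows are indexed by index tuples on the complement `Sᶜ`, columns by index tuples on `S`,
and the entry is the value of `C` at the combined index tuple. -/
def unfolding {d n : ℕ} (C : (Fin d → Fin n) → ℝ) (S : Finset (Fin d)) :
    Matrix ({j // j ∈ Sᶜ} → Fin n) ({j // j ∈ S} → Fin n) ℝ :=
  Matrix.of fun iSbar iS =>
    C (fun j => if h : j ∈ S then iS ⟨j, h⟩ else iSbar ⟨j, Finset.mem_compl.mpr h⟩)

open Matrix Module
open scoped Kronecker

namespace Matrix

variable {R : Type*} [CommSemiring R] [StrongRankCondition R] {m n o : Type*} [Fintype n]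
  [Fintype o]

theorem rank_eq_card_of_mul_eq_one [Fintype m] [DecidableEq n] {L : Matrix n m R}
    {P : Matrix m n R} (h : L * P = 1) : P.rank = Fintype.card n :=
  le_antisymm P.rank_le_card_width <| by
    simpa [h] using rank_mul_le_right L P

theorem rank_mul_eq_left_of_mul_eq_one [DecidableEq n] (A : Matrix m n R) {B : Matrix n o R}
    {B' : Matrix o n R} (h : B * B' = 1) : (A * B).rank = A.rank :=
  le_antisymm (rank_mul_le_left A B) <| by
    simpa [Matrix.mul_assoc, h] using rank_mul_le_left (A * B) B'

end Matrix

theorem Matrix.exists_rank_factorization {K m k : Type*} [Field K] [Fintype m]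
    [Fintype k] (M : Matrix m k K) {r : ℕ} (hr : M.rank = r) :
    ∃ (P : Matrix m (Fin r) K) (L : Matrix (Fin r) m K), L * P = 1 ∧ P * (L * M) = M := by
  classical
  let W := LinearMap.range M.mulVecLin
  let v : Basis (Fin r) K W := finBasisOfFinrankEq K W hr
  obtain ⟨g, hg⟩ := W.subtype.exists_leftInverse_of_injective W.ker_subtype
  have hgW (w : W) : g w = w := LinearMap.congr_fun hg w
  refine ⟨LinearMap.toMatrix' (W.subtype ∘ₗ v.equivFun.symm.toLinearMap),
    LinearMap.toMatrix' (v.equivFun.toLinearMap ∘ₗ g), ?_, ?_⟩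
  · refine Matrix.toLin'.injective (LinearMap.ext fun x => ?_)
    simp only [toLin'_mul, toLin'_toMatrix', LinearMap.comp_apply, LinearEquiv.coe_coe,
      Submodule.subtype_apply, hgW, LinearEquiv.apply_symm_apply, toLin'_one, LinearMap.id_apply]
  · refine Matrix.toLin'.injective (LinearMap.ext fun x => ?_)
    have := hgW ⟨M *ᵥ x, LinearMap.mem_range_self M.mulVecLin x⟩
    simp [Matrix.toLin'_mul, this]

namespace Tensor3

section CommSemiring

variable {K : Type*} [CommSemiring K] {A B F R : Type*}

def unfold (T : A → B → F → K) : Matrix A (B × F) K :=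
  of fun x p => T x p.1 p.2

def rotate (T : A → B → F → K) : B → F → A → K :=
  fun y z x => T x y z

def modeProd [Fintype R] (P : Matrix A R K) (S : R → B → F → K) : A → B → F → K :=
  fun x y z => ∑ α, P x α * S α y z

variable [Fintype R]

theorem unfold_rotate_modeProd [Fintype F] [DecidableEq F] (P : Matrix A R K)
    (S : R → B → F → K) :
    unfold (rotate (modeProd P S)) = unfold (rotate S) * ((1 : Matrix F F K) ⊗ₖ Pᵀ) := by
  ext y ⟨z, x⟩
  simp [unfold, rotate, modeProd, Matrix.mul_apply, Fintype.sum_prod_type, one_apply, mul_comm]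

theorem unfold_rotate_rotate_modeProd [Fintype B] [DecidableEq B] (P : Matrix A R K)
    (S : R → B → F → K) :
    unfold (rotate (rotate (modeProd P S))) =
      unfold (rotate (rotate S)) * (Pᵀ ⊗ₖ (1 : Matrix B B K)) := by
  ext z ⟨x, y⟩
  simp [unfold, rotate, modeProd, Matrix.mul_apply, Fintype.sum_prod_type, one_apply, mul_comm]

end CommSemiring

variable {K : Type*} [Field K] {A B F : Type*} [Fintype A] [Fintype B] [Fintype F]

theorem exists_modeProd_eq (T : A → B → F → K) {r : ℕ} (hr : (unfold T).rank = r) :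
    ∃ (P : Matrix A (Fin r) K) (S : Fin r → B → F → K), T = modeProd P S ∧ P.rank = r ∧
      (unfold (rotate S)).rank = (unfold (rotate T)).rank ∧
      (unfold (rotate (rotate S))).rank = (unfold (rotate (rotate T))).rank := by
  classical
  obtain ⟨P, L, hLP, hPLM⟩ := (unfold T).exists_rank_factorization hr
  let S : Fin r → B → F → K := fun α y z => (L * unfold T) α (y, z)
  have hT : T = modeProd P S := by
    ext x y z
    simpa [Matrix.mul_apply, unfold, modeProd, S] using (congrFun (congrFun hPLM x) (y, z)).symm
  have hLPt : Pᵀ * Lᵀ = 1 := by rw [← transpose_mul, hLP, transpose_one]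
  refine ⟨P, S, hT, by simpa using rank_eq_card_of_mul_eq_one hLP, ?_, ?_⟩
  · rw [hT, unfold_rotate_modeProd, rank_mul_eq_left_of_mul_eq_one (B' := 1 ⊗ₖ Lᵀ)]
    rw [← mul_kronecker_mul, Matrix.one_mul, hLPt, one_kronecker_one]
  · rw [hT, unfold_rotate_rotate_modeProd, rank_mul_eq_left_of_mul_eq_one (B' := Lᵀ ⊗ₖ 1)]
    rw [← mul_kronecker_mul, Matrix.one_mul, hLPt, one_kronecker_one]

theorem exists_tucker_decomposition (T : A → B → F → K) {ra rb rf : ℕ}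
    (ha : (unfold T).rank = ra) (hb : (unfold (rotate T)).rank = rb)
    (hf : (unfold (rotate (rotate T))).rank = rf) :
    ∃ (Ca : Matrix A (Fin ra) K) (Cb : Matrix B (Fin rb) K) (Cf : Matrix (Fin rf) F K)
      (G : Fin ra → Fin rb → Fin rf → K),
      (∀ x y z, T x y z = ∑ α, ∑ β, ∑ θ, Ca x α * Cb y β * G α β θ * Cf θ z) ∧
      Ca.rank = ra ∧ Cb.rank = rb ∧ Cf.rank = rf := by
  obtain ⟨Ca, S₁, rfl, hCa, hS₁, hS₁'⟩ := exists_modeProd_eq T ha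
  obtain ⟨Cb, S₂, hS₂, hCb, hS₂', -⟩ := exists_modeProd_eq (rotate S₁) (hS₁.trans hb)
  obtain ⟨Cf, G, hG, hCf, -, -⟩ := exists_modeProd_eq (rotate S₂) (hS₂'.trans (hS₁'.trans hf))
  refine ⟨Ca, Cb, Cfᵀ, fun α β θ => G θ α β, fun x y z => ?_, hCa, hCb, by rwa [rank_transpose]⟩
  have h₁ (α y z) : S₁ α y z = ∑ β, Cb y β * S₂ β z α := congrFun (congrFun (congrFun hS₂ y) z) α
  have h₂ (β z α) : S₂ β z α = ∑ θ, Cf z θ * G θ α β := congrFun (congrFun (congrFun hG z) α) β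
  simp only [modeProd, h₁, h₂, Finset.mul_sum, transpose_apply]
  simp only [mul_comm, mul_left_comm]

end Tensor3

namespace Finset

variable {ι : Type*} [DecidableEq ι]

def restrictPairEquiv (X : Type*) {U s t : Finset ι} (hst : Disjoint s t) (hU : U = s ∪ t) :
    (U → X) ≃ (s → X) × (t → X) where
  toFun g :=
    (fun j => g ⟨j, hU ▸ mem_union_left t j.2⟩, fun j => g ⟨j, hU ▸ mem_union_right s j.2⟩)
  invFun p j := if h : j.1 ∈ s then p.1 ⟨j, h⟩ else
    p.2 ⟨j, (mem_union.1 (hU ▸ j.2)).resolve_left h⟩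
  left_inv g := by
    funext j
    dsimp only
    split_ifs <;> rfl
  right_inv p := by
    ext j
    · simp [j.2]
    · simp [disjoint_right.1 hst j.2]

theorem restrictPairEquiv_restrict {X : Type*} {U s t : Finset ι} (hst : Disjoint s t)
    (hU : U = s ∪ t) (i : ι → X) :
    restrictPairEquiv X hst hU (U.restrict i) = (s.restrict i, t.restrict i) :=
  rfl

variable [Fintype ι]

theorem exists_restrict_compl_eq {X : Type*} (S : Finset ι) (u : {j // j ∈ Sᶜ} → X)
    (v : S → X) :
    ∃ i : ι → X, Sᶜ.restrict i = u ∧ S.restrict i = v := by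
  refine ⟨fun j => if h : j ∈ S then v ⟨j, h⟩ else u ⟨j, mem_compl.2 h⟩, ?_, ?_⟩
  · ext ⟨j, hj⟩
    simp [mem_compl.1 hj]
  · ext ⟨j, hj⟩
    simp [hj]

theorem compl_eq_union_of_disjoint {s t u : Finset ι} (hst : Disjoint s t) (hsu : Disjoint s u)
    (h : s ∪ t ∪ u = univ) : sᶜ = t ∪ u :=
  IsCompl.compl_eq ⟨disjoint_union_right.2 ⟨hst, hsu⟩,
    codisjoint_iff.2 (by rw [sup_eq_union, top_eq_univ, ← union_assoc, h])⟩

end Finset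

section Unfolding

variable {d n : ℕ}

theorem unfolding_restrict (C : (Fin d → Fin n) → ℝ) (S : Finset (Fin d)) (i : Fin d → Fin n) :
    unfolding C S (Sᶜ.restrict i) (S.restrict i) = C i := by
  simp only [unfolding, of_apply, Finset.restrict]
  congr 1
  funext j
  split_ifs <;> rfl

theorem rank_unfold_eq_rank_unfolding {s t u : Finset (Fin d)} (htu : Disjoint t u)
    (hs : sᶜ = t ∪ u) (C : (Fin d → Fin n) → ℝ) (T : (s → Fin n) → (t → Fin n) → (u → Fin n) → ℝ)
    (hT : ∀ i, T (s.restrict i) (t.restrict i) (u.restrict i) = C i) :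
    (Tensor3.unfold T).rank = (unfolding C s).rank := by
  let e := Finset.restrictPairEquiv (Fin n) htu hs
  suffices Tensor3.unfold T = (unfolding C s)ᵀ.submatrix (Equiv.refl _) e.symm by
    rw [this, rank_submatrix, rank_transpose]
  ext x ⟨y, z⟩
  obtain ⟨i, hi, rfl⟩ := Finset.exists_restrict_compl_eq s (e.symm (y, z)) x
  obtain ⟨rfl, rfl⟩ : y = t.restrict i ∧ z = u.restrict i := by
    rw [← Prod.mk.injEq, ← e.apply_symm_apply (y, z), ← hi]
    rfl
  simp [Tensor3.unfold, hT, ← hi, unfolding_restrict]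

end Unfolding

/-- Existence of the core decomposition `C(i) = Σ_{α,β,θ} C_a(i_a,α) C_b(i_b,β) G(α,β,θ) C_f(θ,i_f)`
for a tripartition `[d] = a ∪ b ∪ f`, with `C_a`, `C_b` of full column rank and `C_f` of full
row rank, where `r_a`, `r_b`, `r_f` are the ranks of the unfoldings of `C` along `a`, `b`, `f`. -/
theorem core_decomposition (d n : ℕ)
    (C : (Fin d → Fin n) → ℝ) (a b f : Finset (Fin d))
    (hab : Disjoint a b) (haf : Disjoint a f) (hbf : Disjoint b f)
    (hcover : a ∪ b ∪ f = Finset.univ)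
    (ra rb rf : ℕ)
    (hra : (unfolding C a).rank = ra)
    (hrb : (unfolding C b).rank = rb)
    (hrf : (unfolding C f).rank = rf) :
    ∃ (Ca : (({j // j ∈ a} → Fin n) × Fin ra) → ℝ)
      (Cb : (({j // j ∈ b} → Fin n) × Fin rb) → ℝ)
      (Cf : (Fin rf × ({j // j ∈ f} → Fin n)) → ℝ)
      (G : Fin ra × Fin rb × Fin rf → ℝ),
      (∀ i : Fin d → Fin n,
        C i = ∑ α : Fin ra, ∑ β : Fin rb, ∑ θ : Fin rf,
          Ca ((fun j => i j.1), α) * Cb ((fun j => i j.1), β) * G (α, β, θ) *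
            Cf (θ, (fun j => i j.1))) ∧
      (Matrix.of fun (ia : {j // j ∈ a} → Fin n) (α : Fin ra) => Ca (ia, α)).rank = ra ∧
      (Matrix.of fun (ib : {j // j ∈ b} → Fin n) (β : Fin rb) => Cb (ib, β)).rank = rb ∧
      (Matrix.of fun (θ : Fin rf) (iff' : {j // j ∈ f} → Fin n) => Cf (θ, iff')).rank = rf := by
  have ha : aᶜ = b ∪ f := Finset.compl_eq_union_of_disjoint hab haf hcover
  have hb : bᶜ = f ∪ a :=
    Finset.compl_eq_union_of_disjoint hbf hab.symm (by rw [← hcover]; ac_rfl)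
  have hf : fᶜ = a ∪ b :=
    Finset.compl_eq_union_of_disjoint haf.symm hbf.symm (by rw [← hcover]; ac_rfl)
  let T (x : a → Fin n) (y : b → Fin n) (z : f → Fin n) : ℝ :=
    unfolding C a ((Finset.restrictPairEquiv (Fin n) hbf ha).symm (y, z)) x
  have hT (i : Fin d → Fin n) : T (a.restrict i) (b.restrict i) (f.restrict i) = C i := by
    simp only [T, ← Finset.restrictPairEquiv_restrict hbf ha, Equiv.symm_apply_apply,
      unfolding_restrict]
  obtain ⟨Ca, Cb, Cf, G, hCG, hCa, hCb, hCf⟩ := Tensor3.exists_tucker_decomposition T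
    ((rank_unfold_eq_rank_unfolding hbf ha C T hT).trans hra)
    ((rank_unfold_eq_rank_unfolding haf.symm hb C _ hT).trans hrb)
    ((rank_unfold_eq_rank_unfolding hab hf C _ hT).trans hrf)
  refine ⟨fun p => Ca p.1 p.2, fun p => Cb p.1 p.2, fun p => Cf p.1 p.2,
    fun g => G g.1 g.2.1 g.2.2, fun i => (hT i).symm.trans (hCG _ _ _), hCa, hCb, hCf⟩
end

section
/- Let {ψ_i}_{i ∈ Fin n} be a family of square-integrable functions ℝ → ℝ that is orthonormal in L²(ℝ). Let C : (Fin d → Fin n) → ℝ and let p : ℝ^d → ℝ be the functional tensor network p(x) = Σ_i C(i) ∏_{j=1}^d ψ_{i_j}(x_j). Let a, b, f ⊆ Fin d be pairwise disjoint with a ∪ b ∪ f = Fin d, let S_a, S_b, S_f be sketch tensors on a, b, f with sketch dimensions r̃_a, r̃_b, r̃_f, and let s_a, s_b, s_f be the associated sketch functions. Then for all μ ∈ Fin r̃_a, ν ∈ Fin r̃_b, ζ ∈ Fin r̃_f, the function x ↦ p(x) s_a(x_a, μ) s_b(x_b, ν) s_f(x_f, ζ) is integrable on ℝ^d and ∫_{ℝ^d}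 p(x) s_a(x_a, μ) s_b(x_b, ν) s_f(x_f, ζ) dx = Σ_{i : Fin d → Fin n} C(i) S_a(i_a, μ) S_b(i_b, ν) S_f(i_f, ζ). -/
/-!
Both factors of the integrand are functional tensor networks in the same variables: `p` with
coefficients `C`, and `s_a s_b s_f` with coefficients `S_a(i_a) S_b(i_b) S_f(i_f)`, because
restricting a multi-index on `Fin d` to `a`, `b`, `f` is a bijection onto triples of multi-indices.
By Fubini the products `∏ⱼ ψ_{i_j}(x_j)` are orthonormal in `L²(ℝ^d)`, so the integral of a
product of two tensor networks is the dot product of their coefficient tensors.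
-/

open MeasureTheory Finset

section ProductBasis

variable {ι κ : Type*} [Fintype κ] {ψ : ι → ℝ → ℝ}

theorem integrable_prod_mul_prod (hψ : ∀ i, MemLp (ψ i) 2) (i k : κ → ι) :
    Integrable fun x : κ → ℝ => (∏ j, ψ (i j) (x j)) * ∏ j, ψ (k j) (x j) := by
  simp_rw [← prod_mul_distrib]
  exact Integrable.fintype_prod fun j => (hψ (i j)).integrable_mul (hψ (k j))

theorem integral_prod_mul_prod_of_orthonormal [DecidableEq ι]
    (horth : ∀ i j, ∫ t, ψ i t * ψ j t = if i = j then 1 else 0) (i k : κ → ι) :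
    ∫ x : κ → ℝ, (∏ j, ψ (i j) (x j)) * ∏ j, ψ (k j) (x j) = if i = k then 1 else 0 := by
  simp_rw [← prod_mul_distrib]
  rw [integral_fintype_prod_volume_eq_prod fun j t => ψ (i j) t * ψ (k j) t]
  simp_rw [horth]
  rw [prod_boole]
  simp [funext_iff]

end ProductBasis

noncomputable def tensorNetwork {ι κ : Type*} [Fintype ι] [Fintype κ] [DecidableEq κ]
    (ψ : ι → ℝ → ℝ) (C : (κ → ι) → ℝ) (x : κ → ℝ) : ℝ :=
  ∑ i, C i * ∏ j, ψ (i j) (x j)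

section TensorNetwork

variable {ι κ : Type*} [Fintype ι] [Fintype κ] [DecidableEq κ] {ψ : ι → ℝ → ℝ}

theorem tensorNetwork_mul_tensorNetwork (C D : (κ → ι) → ℝ) (x : κ → ℝ) :
    tensorNetwork ψ C x * tensorNetwork ψ D x =
      ∑ i, ∑ k, C i * D k * ((∏ j, ψ (i j) (x j)) * ∏ j, ψ (k j) (x j)) := by
  rw [tensorNetwork, tensorNetwork, Fintype.sum_mul_sum]
  exact sum_congr rfl fun i _ => sum_congr rfl fun k _ => by ring

theorem integrable_tensorNetwork_mul (hψ : ∀ i, MemLp (ψ i) 2) (C D : (κ → ι) → ℝ) :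
    Integrable fun x => tensorNetwork ψ C x * tensorNetwork ψ D x := by
  simp_rw [tensorNetwork_mul_tensorNetwork]
  exact integrable_finsetSum _ fun i _ => integrable_finsetSum _ fun k _ =>
    (integrable_prod_mul_prod hψ i k).const_mul _

theorem integral_tensorNetwork_mul [DecidableEq ι] (hψ : ∀ i, MemLp (ψ i) 2)
    (horth : ∀ i j, ∫ t, ψ i t * ψ j t = if i = j then 1 else 0) (C D : (κ → ι) → ℝ) :
    ∫ x, tensorNetwork ψ C x * tensorNetwork ψ D x = ∑ i, C i * D i := by
  simp_rw [tensorNetwork_mul_tensorNetwork]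
  rw [integral_finsetSum _ fun i _ => integrable_finsetSum _ fun k _ =>
    (integrable_prod_mul_prod hψ i k).const_mul _]
  refine sum_congr rfl fun i _ => ?_
  rw [integral_finsetSum _ fun k _ => (integrable_prod_mul_prod hψ i k).const_mul _]
  simp_rw [integral_const_mul, integral_prod_mul_prod_of_orthonormal horth, mul_ite, mul_one,
    mul_zero, sum_ite_eq, mem_univ, if_true]

end TensorNetwork

section Tripartition

variable {ι κ : Type*} [Fintype κ] [DecidableEq κ] {a b f : Finset κ}

theorem prod_eq_prod_mul_prod_mul_prod_of_tripartition {M : Type*} [CommMonoid M]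
    (hab : Disjoint a b) (haf : Disjoint a f) (hbf : Disjoint b f)
    (hcover : a ∪ b ∪ f = univ) (g : κ → M) :
    ∏ j, g j = (∏ j : a, g j) * (∏ j : b, g j) * ∏ j : f, g j := by
  rw [prod_coe_sort, prod_coe_sort, prod_coe_sort, ← prod_union hab,
    ← prod_union (disjoint_union_left.mpr ⟨haf, hbf⟩), hcover]

theorem bijective_restrict_tripartition
    (hab : Disjoint a b) (haf : Disjoint a f) (hbf : Disjoint b f)
    (hcover : a ∪ b ∪ f = univ) :
    Function.Bijective fun k : κ → ι =>
      (((fun j : a => k j), fun j : b => k j), fun j : f => k j) := by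
  have hmem : ∀ j, j ∈ a ∨ j ∈ b ∨ j ∈ f := fun j => by
    simpa [← hcover, or_assoc] using mem_univ j
  constructor
  · intro k k' h
    simp only [Prod.mk.injEq, funext_iff, Subtype.forall] at h
    obtain ⟨⟨ha, hb⟩, hf⟩ := h
    funext j
    rcases hmem j with hj | hj | hj
    exacts [ha j hj, hb j hj, hf j hj]
  · rintro ⟨⟨ka, kb⟩, kf⟩
    refine ⟨fun j => if hja : j ∈ a then ka ⟨j, hja⟩ else if hjb : j ∈ b then kb ⟨j, hjb⟩
      else kf ⟨j, (hmem j).resolve_left hja |>.resolve_left hjb⟩, ?_⟩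
    simp only [Prod.mk.injEq]
    refine ⟨⟨funext fun j => dif_pos j.2, funext fun j => ?_⟩, funext fun j => ?_⟩
    · rw [dif_neg (disjoint_right.mp hab j.2), dif_pos j.2]
    · rw [dif_neg (disjoint_right.mp haf j.2), dif_neg (disjoint_right.mp hbf j.2)]

theorem tensorNetwork_mul_mul_of_tripartition [Fintype ι] {ψ : ι → ℝ → ℝ}
    (hab : Disjoint a b) (haf : Disjoint a f) (hbf : Disjoint b f)
    (hcover : a ∪ b ∪ f = univ) (A : (a → ι) → ℝ) (B : (b → ι) → ℝ) (F : (f → ι) → ℝ)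
    (x : κ → ℝ) :
    tensorNetwork ψ A (fun j => x j) * tensorNetwork ψ B (fun j => x j) *
        tensorNetwork ψ F (fun j => x j) =
      tensorNetwork ψ
        (fun k => A (fun j => k j.1) * B (fun j => k j.1) * F (fun j => k j.1)) x := by
  have hexpand : tensorNetwork ψ A (fun j => x j) * tensorNetwork ψ B (fun j => x j) *
      tensorNetwork ψ F (fun j => x j) = ∑ t : ((a → ι) × (b → ι)) × (f → ι),
        (A t.1.1 * ∏ j, ψ (t.1.1 j) (x j)) * (B t.1.2 * ∏ j, ψ (t.1.2 j) (x j)) *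
          (F t.2 * ∏ j, ψ (t.2 j) (x j)) := by
    rw [tensorNetwork, tensorNetwork, tensorNetwork, Fintype.sum_mul_sum,
      ← Fintype.sum_prod_type', Fintype.sum_mul_sum, ← Fintype.sum_prod_type']
  rw [hexpand]
  refine (Fintype.sum_bijective _ (bijective_restrict_tripartition hab haf hbf hcover) _ _
    fun k => ?_).symm
  rw [prod_eq_prod_mul_prod_mul_prod_of_tripartition hab haf hbf hcover]
  ring

end Tripartition

/-- For a functional tensor network `p` over an orthonormal family `{ψ_i} ⊆ L²(ℝ)` and sketch
functions `s_a`, `s_b`, `s_f` built from sketch tensors on a tripartition `[d] = a ∪ b ∪ f`,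
the function `x ↦ p(x) s_a(x_a,μ) s_b(x_b,ν) s_f(x_f,ζ)` is integrable on `ℝ^d` and its
integral equals the contraction `Σ_i C(i) S_a(i_a,μ) S_b(i_b,ν) S_f(i_f,ζ)`. -/
theorem sketch_moment_formula_tripartition (d n : ℕ) (ψ : Fin n → ℝ → ℝ)
    (hψL2 : ∀ i, MemLp (ψ i) 2 (volume : Measure ℝ))
    (horth : ∀ i j, ∫ x : ℝ, ψ i x * ψ j x = if i = j then (1 : ℝ) else 0)
    (C : (Fin d → Fin n) → ℝ)
    (p : (Fin d → ℝ) → ℝ)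
    (hp : ∀ x : Fin d → ℝ, p x = ∑ i : Fin d → Fin n, C i * ∏ j : Fin d, ψ (i j) (x j))
    (a b f : Finset (Fin d))
    (hab : Disjoint a b) (haf : Disjoint a f) (hbf : Disjoint b f)
    (hcover : a ∪ b ∪ f = Finset.univ)
    (rta rtb rtf : ℕ)
    (Sa : (({j // j ∈ a} → Fin n) × Fin rta) → ℝ)
    (Sb : (({j // j ∈ b} → Fin n) × Fin rtb) → ℝ)
    (Sf : (({j // j ∈ f} → Fin n) × Fin rtf) → ℝ)
    (sa : ({j // j ∈ a} → ℝ) → Fin rta → ℝ)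
    (sb : ({j // j ∈ b} → ℝ) → Fin rtb → ℝ)
    (sf : ({j // j ∈ f} → ℝ) → Fin rtf → ℝ)
    (hsa : ∀ (xa : {j // j ∈ a} → ℝ) (μ : Fin rta),
      sa xa μ = ∑ ia : {j // j ∈ a} → Fin n, Sa (ia, μ) * ∏ j : {j // j ∈ a}, ψ (ia j) (xa j))
    (hsb : ∀ (xb : {j // j ∈ b} → ℝ) (ν : Fin rtb),
      sb xb ν = ∑ ib : {j // j ∈ b} → Fin n, Sb (ib, ν) * ∏ j : {j // j ∈ b}, ψ (ib j) (xb j))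
    (hsf : ∀ (xf : {j // j ∈ f} → ℝ) (ζ : Fin rtf),
      sf xf ζ = ∑ if' : {j // j ∈ f} → Fin n,
        Sf (if', ζ) * ∏ j : {j // j ∈ f}, ψ (if' j) (xf j)) :
    ∀ (μ : Fin rta) (ν : Fin rtb) (ζ : Fin rtf),
      Integrable (fun x : Fin d → ℝ =>
        p x * sa (fun j => x j.1) μ * sb (fun j => x j.1) ν * sf (fun j => x j.1) ζ)
        (volume : Measure (Fin d → ℝ)) ∧
      ∫ x : Fin d → ℝ,
          p x * sa (fun j => x j.1) μ * sb (fun j => x j.1) ν * sf (fun j => x j.1) ζ =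
        ∑ i : Fin d → Fin n,
          C i * Sa ((fun j => i j.1), μ) * Sb ((fun j => i j.1), ν) *
            Sf ((fun j => i j.1), ζ) := by
  intro μ ν ζ
  set T : (Fin d → Fin n) → ℝ := fun i =>
    Sa ((fun j => i j.1), μ) * Sb ((fun j => i j.1), ν) * Sf ((fun j => i j.1), ζ)
  have hsketch : ∀ x : Fin d → ℝ,
      sa (fun j => x j.1) μ * sb (fun j => x j.1) ν * sf (fun j => x j.1) ζ =
        tensorNetwork ψ T x := fun x => by
    simp only [hsa, hsb, hsf]
    exact tensorNetwork_mul_mul_of_tripartition hab haf hbf hcover _ _ _ x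
  have hintegrand : (fun x : Fin d → ℝ =>
      p x * sa (fun j => x j.1) μ * sb (fun j => x j.1) ν * sf (fun j => x j.1) ζ) =
      fun x => tensorNetwork ψ C x * tensorNetwork ψ T x := by
    funext x
    rw [show p x = tensorNetwork ψ C x from hp x, ← hsketch]
    ring
  rw [hintegrand, integral_tensorNetwork_mul hψL2 horth]
  exact ⟨integrable_tensorNetwork_mul hψL2 C T, sum_congr rfl fun i _ => by ring⟩
end

section
/- Let Δ ≥ 1, μ ≥ 1, m = 2^μ, d = m^Δ = 2^{Δμ}, and define the interleaving map ι : (Fin m)^Δ → Fin d as follows: if for each δ ∈ {1,…,Δ} the number i_δ − 1 ∈ {0,…,m−1} has binary digits a_{δ1} a_{δ2} ⋯ a_{δμ} (most significant first), then ι(i_1,…,i_Δ) − 1 has the Δμ binary digits a_{11} a_{21} ⋯ a_{Δ1} a_{12} a_{22} ⋯ a_{Δ2} ⋯ a_{1μ} ⋯ a_{Δμ} (most significant first). Then: (i) ι is a bijection; and (ii) for every level l = Δμ' + δ with 0 ≤ μ' ≤ μ, 0 ≤ δ < Δ, 0 ≤ l ≤ Δμ, and every block index 1 ≤ k ≤ 2^l,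 the preimage ι⁻¹(I_k^{(l)}) of the hierarchical block I_k^{(l)} = {2^{Δμ−l}(k−1)+1, …, 2^{Δμ−l}k} is a Cartesian product J_1 × ⋯ × J_Δ, where each J_{δ'} ⊆ {1,…,m} is a dyadic interval of the form {c·2^t + 1, …, (c+1)·2^t} with t = μ − μ' − 1 if δ' ≤ δ and t = μ − μ' if δ' > δ. -/
/-- The interleaving map for a `Δ`-dimensional grid with `m = 2^μ` points per axis: the
(0-based) linearized index of the multi-index `i` is obtained by interleaving the `μ` binary
digits (most significant first) of the `Δ` coordinates, taking from each coordinate its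
`t`-th most significant digit in turn, for `t = 1, …, μ`.  (The final `% 2^(Δ*μ)` is a
no-op since the interleaved value is always `< 2^(Δ*μ)`.) -/
def interleave (Δ μ : ℕ) (i : Fin Δ → Fin (2 ^ μ)) : Fin (2 ^ (Δ * μ)) :=
  ⟨(∑ t : Fin μ, ∑ δ : Fin Δ,
      ((i δ).val / 2 ^ (μ - 1 - t.val)) % 2 * 2 ^ (Δ * μ - 1 - (t.val * Δ + δ.val)))
      % 2 ^ (Δ * μ),
    Nat.mod_lt _ (by positivity)⟩

/-!
Read in binary, digit `t * Δ + δ` of `ι(i)` is digit `t` of `i_δ` (both most significant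
first). So the first `l = Δ * μ' + δ` digits of `ι(i)`, which are `ι(i) / 2 ^ (Δ * μ - l)` and
determine the block of level `l` containing `ι(i)`, are exactly the first `μ' + 1` digits of
`i_δ'` for `δ' < δ` and the first `μ'` digits of the other coordinates. Fixing those digits
means fixing each quotient `i_δ' / 2 ^ (μ - μ' - 1)`, resp. `i_δ' / 2 ^ (μ - μ')`, i.e. a dyadic
interval on each axis. At `l = Δ * μ` this says that `ι` is injective, hence bijective by counting.
-/

open Function

namespace Nat

theorem testBit_sum_two_pow (s : Finset ℕ) (n : ℕ) :
    (∑ i ∈ s, 2 ^ i).testBit n = true ↔ n ∈ s := by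
  rw [← mem_bitIndices, ← List.mem_toFinset, Finset.toFinset_bitIndices_sum_two_pow]

theorem div_two_pow_eq_iff_testBit {x y n s : ℕ} (hx : x < 2 ^ n) (hy : y < 2 ^ n) :
    x / 2 ^ s = y / 2 ^ s ↔ ∀ p < n, s ≤ p → x.testBit p = y.testBit p := by
  constructor
  · rintro h p - hsp
    obtain ⟨q, rfl⟩ := exists_add_of_le hsp
    rw [add_comm, ← testBit_div_two_pow, h, testBit_div_two_pow]
  · refine fun h => eq_of_testBit_eq fun q => ?_
    rw [testBit_div_two_pow, testBit_div_two_pow]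
    by_cases hq : q + s < n
    · exact h _ hq (Nat.le_add_left s q)
    · have hn : 2 ^ n ≤ 2 ^ (q + s) := Nat.pow_le_pow_right two_pos (not_lt.1 hq)
      rw [testBit_lt_two_pow (hx.trans_le hn), testBit_lt_two_pow (hy.trans_le hn)]

theorem div_two_pow_eq_iff_testBit_rev {x y μ T : ℕ} (hx : x < 2 ^ μ) (hy : y < 2 ^ μ) :
    x / 2 ^ T = y / 2 ^ T ↔
      ∀ t : Fin μ, t + T < μ → x.testBit (μ - 1 - t) = y.testBit (μ - 1 - t) := by
  rw [div_two_pow_eq_iff_testBit hx hy]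
  constructor
  · exact fun h t ht => h _ (by omega) (by omega)
  · intro h p hp hTp
    simpa [show μ - 1 - (μ - 1 - p) = p by omega] using
      h ⟨μ - 1 - p, by omega⟩ (show μ - 1 - p + T < μ by omega)

theorem div_two_pow_mod_two_mul (x a b : ℕ) :
    x / 2 ^ a % 2 * b = if x.testBit a then b else 0 := by
  rw [testBit_eq_decide_div_mod_eq]
  rcases mod_two_eq_zero_or_one (x / 2 ^ a) with h | h <;> simp [h]

theorem div_eq_iff_mul_le_and_lt {x b c : ℕ} (hb : 0 < b) :
    x / b = c ↔ c * b ≤ x ∧ x < (c + 1) * b := by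
  rw [Nat.div_eq_iff hb, add_one_mul]
  omega

theorem mul_add_lt_mul_add_iff {n a b r s : ℕ} (hr : r < n) (hs : s < n) :
    a * n + r < b * n + s ↔ a < b ∨ a = b ∧ r < s := by
  rcases lt_trichotomy a b with hab | rfl | hab
  · have : (a + 1) * n ≤ b * n := Nat.mul_le_mul_right n hab
    simp only [hab, true_or, iff_true]
    nlinarith
  · simp
  · have : (b + 1) * n ≤ a * n := Nat.mul_le_mul_right n hab
    simp only [hab.not_gt, hab.ne', false_and, or_self, iff_false, not_lt]
    nlinarith

theorem mul_add_lt_mul {t μ δ Δ : ℕ} (ht : t < μ) (hδ : δ < Δ) : t * Δ + δ < Δ * μ := by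
  simpa [ht, mul_comm Δ μ] using
    mul_add_lt_mul_add_iff hδ (zero_lt_of_lt hδ) (a := t) (b := μ) (s := 0)

end Nat

section Interleave

variable {Δ μ : ℕ}

-- Digit `t * Δ + δ` of `interleave Δ μ i` is digit `t` of `i δ`, both counted from the most
-- significant end; `testBit` counts from the least significant one.
theorem testBit_interleave (i : Fin Δ → Fin (2 ^ μ)) (t : Fin μ) (δ : Fin Δ) :
    (interleave Δ μ i).val.testBit (Δ * μ - 1 - (t * Δ + δ)) =
      (i δ).val.testBit (μ - 1 - t) := by
  set e : Fin μ × Fin Δ → ℕ := fun x => Δ * μ - 1 - (x.1 * Δ + x.2)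
  have he : Injective e := by
    intro x y hxy
    have hx := Nat.mul_add_lt_mul x.1.isLt x.2.isLt
    have hy := Nat.mul_add_lt_mul y.1.isLt y.2.isLt
    refine finProdFinEquiv.injective (Fin.ext ?_)
    simp only [finProdFinEquiv_apply_val, e] at hxy ⊢
    rw [mul_comm Δ x.1.val, mul_comm Δ y.1.val]
    omega
  set S := Finset.univ.filter fun x : Fin μ × Fin Δ => (i x.2).val.testBit (μ - 1 - x.1)
  have hsum : (interleave Δ μ i).val = (∑ p ∈ S.image e, 2 ^ p) % 2 ^ (Δ * μ) := by
    rw [Finset.sum_image he.injOn, Finset.sum_filter, Fintype.sum_prod_type]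
    simp only [interleave, Nat.div_two_pow_mod_two_mul, e]
  have hlt : Δ * μ - 1 - (t * Δ + δ) < Δ * μ := by
    have := Nat.mul_add_lt_mul t.isLt δ.isLt
    omega
  show (interleave Δ μ i).val.testBit (e (t, δ)) = _
  rw [hsum, Nat.testBit_mod_two_pow, decide_eq_true hlt, Bool.true_and, Bool.eq_iff_iff,
    Nat.testBit_sum_two_pow, he.mem_finset_image]
  simp [S]

theorem interleave_div_two_pow_eq_iff {l : ℕ} (i j : Fin Δ → Fin (2 ^ μ)) :
    (interleave Δ μ i).val / 2 ^ (Δ * μ - l) = (interleave Δ μ j).val / 2 ^ (Δ * μ - l) ↔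
      ∀ (t : Fin μ) (δ : Fin Δ), t * Δ + δ < l →
        (i δ).val.testBit (μ - 1 - t) = (j δ).val.testBit (μ - 1 - t) := by
  rw [Nat.div_two_pow_eq_iff_testBit (interleave Δ μ i).isLt (interleave Δ μ j).isLt]
  constructor
  · intro h t δ htδ
    have := Nat.mul_add_lt_mul t.isLt δ.isLt
    rw [← testBit_interleave, ← testBit_interleave]
    exact h _ (by omega) (by omega)
  · intro h p hp hlp
    obtain ⟨⟨t, δ⟩, htδ⟩ := (finProdFinEquiv (m := μ) (n := Δ)).surjective
      ⟨Δ * μ - 1 - p, by rw [mul_comm μ Δ]; omega⟩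
    have hq : t * Δ + δ = Δ * μ - 1 - p := by
      simpa [finProdFinEquiv_apply_val, add_comm, mul_comm] using congrArg Fin.val htδ
    have hp' : p = Δ * μ - 1 - (t * Δ + δ) := by omega
    rw [hp', testBit_interleave, testBit_interleave]
    exact h t δ (by omega)

theorem interleave_div_eq_iff_forall_div_eq {l : ℕ} (T : Fin Δ → ℕ)
    (hT : ∀ (t : Fin μ) (δ : Fin Δ), t * Δ + δ < l ↔ t + T δ < μ) (i j : Fin Δ → Fin (2 ^ μ)) :
    (interleave Δ μ i).val / 2 ^ (Δ * μ - l) = (interleave Δ μ j).val / 2 ^ (Δ * μ - l) ↔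
      ∀ δ, (i δ).val / 2 ^ T δ = (j δ).val / 2 ^ T δ := by
  simp only [interleave_div_two_pow_eq_iff, hT,
    Nat.div_two_pow_eq_iff_testBit_rev (i _).isLt (j _).isLt]
  exact forall_comm

theorem interleave_injective : Injective (interleave Δ μ) := by
  intro i j hij
  have key := (interleave_div_eq_iff_forall_div_eq (l := Δ * μ) 0
    (fun t δ => by simp [Nat.mul_add_lt_mul t.isLt δ.isLt, t.isLt]) i j).1 (by rw [hij])
  funext δ
  simpa [Fin.ext_iff] using key δ

theorem interleave_bijective : Bijective (interleave Δ μ) := by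
  rw [Fintype.bijective_iff_injective_and_card]
  exact ⟨interleave_injective, by simp [← pow_mul, mul_comm]⟩

end Interleave

theorem mul_add_lt_level_iff {Δ μ μ' δ t δ' : ℕ} (hδ : δ < Δ) (hδ' : δ' < Δ) (ht : t < μ)
    (hl : Δ * μ' + δ ≤ Δ * μ) :
    t * Δ + δ' < Δ * μ' + δ ↔ t + (if δ' < δ then μ - μ' - 1 else μ - μ') < μ := by
  rw [mul_comm Δ μ', Nat.mul_add_lt_mul_add_iff hδ' hδ]
  rcases Nat.lt_or_ge μ' μ with hμ' | hμ'
  · split_ifs <;> omega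
  · have := Nat.mul_le_mul_left Δ hμ'
    split_ifs <;> omega

theorem interleave_bijective_and_blocks_are_boxes_general (Δ μ : ℕ) :
    Function.Bijective (interleave Δ μ) ∧
    ∀ μ' δ : ℕ, μ' ≤ μ → δ < Δ →
      ∀ l : ℕ, l = Δ * μ' + δ → l ≤ Δ * μ →
        ∀ k : ℕ, 1 ≤ k → k ≤ 2 ^ l →
          ∃ c : Fin Δ → ℕ,
            ∀ i : Fin Δ → Fin (2 ^ μ),
              (2 ^ (Δ * μ - l) * (k - 1) ≤ (interleave Δ μ i).val ∧
                  (interleave Δ μ i).val < 2 ^ (Δ * μ - l) * k) ↔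
                ∀ δ' : Fin Δ,
                  c δ' * 2 ^ (if δ'.val < δ then μ - μ' - 1 else μ - μ') ≤ (i δ').val ∧
                  (i δ').val < (c δ' + 1) * 2 ^ (if δ'.val < δ then μ - μ' - 1 else μ - μ') := by
  refine ⟨interleave_bijective, ?_⟩
  rintro μ' δ - hδ l rfl hl _ hk1 hk2
  obtain ⟨k, rfl⟩ := Nat.exists_eq_add_of_le' hk1
  set s := Δ * μ - (Δ * μ' + δ)
  have hs : 0 < 2 ^ s := Nat.two_pow_pos s
  have hk : k * 2 ^ s < 2 ^ (Δ * μ) := by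
    calc k * 2 ^ s < 2 ^ (Δ * μ' + δ) * 2 ^ s := Nat.mul_lt_mul_of_pos_right (by omega) hs
      _ = 2 ^ (Δ * μ) := by rw [← pow_add, Nat.add_sub_cancel' hl]
  obtain ⟨i₀, hi₀⟩ := interleave_bijective.2 ⟨k * 2 ^ s, hk⟩
  have hv₀ : (interleave Δ μ i₀).val / 2 ^ s = k := by rw [hi₀, Nat.mul_div_cancel _ hs]
  refine ⟨fun δ' => (i₀ δ').val / 2 ^ (if δ'.val < δ then μ - μ' - 1 else μ - μ'), fun i => ?_⟩
  rw [Nat.add_sub_cancel, mul_comm _ k, mul_comm _ (k + 1), ← Nat.div_eq_iff_mul_le_and_lt hs,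
    ← hv₀, interleave_div_eq_iff_forall_div_eq _
      (fun t δ' => mul_add_lt_level_iff hδ δ'.isLt t.isLt hl)]
  simp only [Nat.div_eq_iff_mul_le_and_lt (Nat.two_pow_pos _)]

/-- (i) The interleaving map `ι : (Fin m)^Δ → Fin d`, `d = m^Δ = 2^{Δμ}`, is a bijection;
(ii) for every level `l = Δμ' + δ` (`0 ≤ μ' ≤ μ`, `0 ≤ δ < Δ`, `l ≤ Δμ`) and block index
`1 ≤ k ≤ 2^l`, the preimage under `ι` of the hierarchical block `I_k^{(l)}` is a Cartesian
product of dyadic intervals, where the interval on axis `δ'` has length `2^{μ-μ'-1}` if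
`δ' ≤ δ` and `2^{μ-μ'}` if `δ' > δ` (axes here 0-based, so the condition reads `δ'.val < δ`). -/
theorem interleave_bijective_and_blocks_are_boxes (Δ μ : ℕ) (hΔ : 1 ≤ Δ) (hμ : 1 ≤ μ) :
    Function.Bijective (interleave Δ μ) ∧
    ∀ μ' δ : ℕ, μ' ≤ μ → δ < Δ →
      ∀ l : ℕ, l = Δ * μ' + δ → l ≤ Δ * μ →
        ∀ k : ℕ, 1 ≤ k → k ≤ 2 ^ l →
          ∃ c : Fin Δ → ℕ,
            ∀ i : Fin Δ → Fin (2 ^ μ),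
              (2 ^ (Δ * μ - l) * (k - 1) ≤ (interleave Δ μ i).val ∧
                  (interleave Δ μ i).val < 2 ^ (Δ * μ - l) * k) ↔
                ∀ δ' : Fin Δ,
                  c δ' * 2 ^ (if δ'.val < δ then μ - μ' - 1 else μ - μ') ≤ (i δ').val ∧
                  (i δ').val < (c δ' + 1) * 2 ^ (if δ'.val < δ then μ - μ' - 1 else μ - μ') :=
  interleave_bijective_and_blocks_are_boxes_general Δ μ
end
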